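/- Let X be a compact metric space, f : X → X continuous, p ≥ 1 an integer, and K₀, …, K_{p−1} nonempty compact subsets of X such that f(K_i) = K_{i+1 (mod p)} for all i (so f maps each K_i onto the next one). Assume there is M ∈ ℕ such that for every i and every y ∈ X, the set {x ∈ K_i : f(x) = y} has at most M elements. Then the topological entropies of f^[p] on K_i are equal for all i, and the topological entropy of f on K₀ ∪ … ∪ K_{p−1} equals (1/p) times the topological entropy of f^[p] on K₀. -/

import Mathlib

open Dynamics

/-!
`f` commutes with `f^[p]` and is uniformly continuous, so
`h(f^[p] | K (i+1)) = h(f^[p] | f '' K i) ≤ h(f^[p] | K i)`; going once around the cycle forces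
all these entropies to be equal. Entropy of a finite union is the maximum, so `f^[p]` has the same
entropy on `⋃ K i` as on `K 0`. Finally `h(f^[p] | F) = p · h(f | F)` for every `F`, because the
`(U, p n)`-dynamical entourage of `f` is the `(U_p, n)`-dynamical entourage of `f^[p]`, where `U_p`
is the `p`-step dynamical entourage of `f` for `U`.
-/

lemma Antitone.eq_of_periodic {α : Type*} [PartialOrder α] {g : ℕ → α} (hg : Antitone g) {p : ℕ}
    (hper : Function.Periodic g p) (hp : p ≠ 0) (i j : ℕ) : g i = g j := by
  have key : ∀ i j, g i ≤ g j := fun i j ↦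
    hper.nat_mul j i ▸ hg (by nlinarith [Nat.one_le_iff_ne_zero.2 hp])
  exact (key i j).antisymm (key j i)

namespace Dynamics

open Function ExpGrowth ENNReal

variable {X : Type*}

lemma dynEntourage_iterate (f : X → X) (U : SetRel X X) (p n : ℕ) :
    dynEntourage (f^[p]) (dynEntourage f U p) n = dynEntourage f U (p * n) := by
  ext ⟨x, y⟩
  simp only [mem_dynEntourage, ← iterate_mul, ← iterate_add_apply]
  constructor
  · intro h j hj
    have hp : 0 < p := Nat.pos_of_ne_zero (by rintro rfl; simp at hj)
    simpa only [Nat.mod_add_div] using h (j / p) (Nat.div_lt_of_lt_mul hj) (j % p) (j.mod_lt hp)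
  · intro h k hk r hr
    exact h _ (by nlinarith)

lemma dynEntourage_mul_subset_iterate (f : X → X) (U : SetRel X X) {p : ℕ} (hp : p ≠ 0)
    (n : ℕ) : dynEntourage f U (p * n) ⊆ dynEntourage (f^[p]) U n := by
  rw [← dynEntourage_iterate]
  refine dynEntourage_monotone _ n ?_
  simpa using dynEntourage_antitone f U (Nat.one_le_iff_ne_zero.2 hp)

lemma coverMincard_iterate_dynEntourage (f : X → X) (F : Set X) (U : SetRel X X) (p n : ℕ) :
    coverMincard (f^[p]) F (dynEntourage f U p) n = coverMincard f F U (p * n) := by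
  simp only [coverMincard, IsDynCoverOf, dynEntourage_iterate]

lemma coverMincard_iterate_le (f : X → X) (F : Set X) (U : SetRel X X) {p : ℕ} (hp : p ≠ 0)
    (n : ℕ) : coverMincard (f^[p]) F U n ≤ coverMincard f F U (p * n) :=
  le_iInf₂ fun _ hs ↦ IsDynCoverOf.coverMincard_le_card <|
    hs.mono_entourage (dynEntourage_mul_subset_iterate f U hp n)

lemma coverEntropyEntourage_iterate_dynEntourage (f : X → X) (F : Set X) (U : SetRel X X)
    {p : ℕ} (hp : p ≠ 0) :
    coverEntropyEntourage (f^[p]) F (dynEntourage f U p) = p * coverEntropyEntourage f F U := by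
  simp only [coverEntropyEntourage, coverMincard_iterate_dynEntourage]
  exact Monotone.expGrowthSup_comp_mul (u := fun n ↦ (coverMincard f F U n : ℝ≥0∞))
    (fun _ _ h ↦ ENat.toENNReal_mono (coverMincard_monotone_time f F U h)) hp

lemma coverEntropyEntourage_iterate_le (f : X → X) (F : Set X) (U : SetRel X X)
    {p : ℕ} (hp : p ≠ 0) :
    coverEntropyEntourage (f^[p]) F U ≤ p * coverEntropyEntourage f F U := by
  rw [← coverEntropyEntourage_iterate_dynEntourage f F U hp]
  exact expGrowthSup_monotone fun n ↦ ENat.toENNReal_mono <|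
    (coverMincard_iterate_le f F U hp n).trans_eq (coverMincard_iterate_dynEntourage f F U p n).symm

theorem coverEntropy_iterate [UniformSpace X] {f : X → X} (hf : UniformContinuous f)
    (F : Set X) {p : ℕ} (hp : p ≠ 0) : coverEntropy (f^[p]) F = p * coverEntropy f F := by
  have hp₀ : (0 : EReal) < p := by exact_mod_cast Nat.pos_of_ne_zero hp
  refine le_antisymm (iSup₂_le fun U hU ↦ ?_) ?_
  · exact (coverEntropyEntourage_iterate_le f F U hp).trans <|
      mul_le_mul_of_nonneg_left (coverEntropyEntourage_le_coverEntropy f F hU) hp₀.le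
  · rw [mul_comm, ← EReal.le_div_iff_mul_le hp₀ (EReal.natCast_ne_top p)]
    refine iSup₂_le fun U hU ↦ ?_
    rw [EReal.le_div_iff_mul_le hp₀ (EReal.natCast_ne_top p), mul_comm,
      ← coverEntropyEntourage_iterate_dynEntourage f F U hp]
    exact coverEntropyEntourage_le_coverEntropy _ F (dynEntourage_mem_uniformity hf hU p)

theorem coverEntropy_iterate_eq_of_image_cycle [UniformSpace X] {f : X → X}
    (hf : UniformContinuous f) {p : ℕ} (hp : p ≠ 0) {K : ℕ → Set X}
    (hK : ∀ i < p, f '' K i = K ((i + 1) % p)) {i j : ℕ} (hi : i < p) (hj : j < p) :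
    coverEntropy (f^[p]) (K i) = coverEntropy (f^[p]) (K j) := by
  set g : ℕ → EReal := fun i ↦ coverEntropy (f^[p]) (K (i % p))
  have hstep : ∀ i, g (i + 1) ≤ g i := fun i ↦ by
    have := coverEntropy_image_le_of_uniformContinuous (Commute.self_iterate f p) hf (K (i % p))
    rwa [hK _ (i.mod_lt (Nat.pos_of_ne_zero hp)), Nat.mod_add_mod] at this
  have hg : Antitone g := antitone_nat_of_succ_le hstep
  have hper : Periodic g p := fun i ↦ by simp only [g, Nat.add_mod_right]
  simpa only [g, Nat.mod_eq_of_lt hi, Nat.mod_eq_of_lt hj] using hg.eq_of_periodic hper hp i j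

end Dynamics

theorem coverEntropy_cycle_of_compacta_onto_general
    {X : Type*} [MetricSpace X] [CompactSpace X]
    (f : X → X) (hf : Continuous f)
    (p : ℕ) (hp : 1 ≤ p) (K : ℕ → Set X)
    (hKmap : ∀ i < p, f '' K i = K ((i + 1) % p)) :
    (∀ i < p, ∀ j < p, coverEntropy (f^[p]) (K i) = coverEntropy (f^[p]) (K j)) ∧
      coverEntropy f (⋃ i < p, K i)
        = (1 / (p : EReal)) * coverEntropy (f^[p]) (K 0) := by
  have hfu : UniformContinuous f := CompactSpace.uniformContinuous_of_continuous hf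
  have hp₀ : p ≠ 0 := Nat.one_le_iff_ne_zero.1 hp
  have hcycle : ∀ i < p, ∀ j < p, coverEntropy (f^[p]) (K i) = coverEntropy (f^[p]) (K j) :=
    fun _ hi _ hj ↦ coverEntropy_iterate_eq_of_image_cycle hfu hp₀ hKmap hi hj
  have hunion : coverEntropy (f^[p]) (⋃ i < p, K i) = coverEntropy (f^[p]) (K 0) := by
    rw [show (⋃ i < p, K i) = ⋃ i ∈ Finset.range p, K i by simp, coverEntropy_biUnion_finset]
    exact le_antisymm (iSup₂_le fun i hi ↦ (hcycle i (Finset.mem_range.1 hi) 0 hp).le)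
      (le_iSup₂_of_le 0 (Finset.mem_range.2 hp) le_rfl)
  refine ⟨hcycle, ?_⟩
  have hp' : (p : EReal) ≠ 0 := by exact_mod_cast hp₀
  rw [← hunion, coverEntropy_iterate hfu _ hp₀, ← mul_assoc,
    EReal.div_mul_cancel (EReal.natCast_ne_bot p) (EReal.natCast_ne_top p) hp', one_mul]

/-- Lemma 7.3 (abstract form): if `f` maps each nonempty compact set `K i` onto
`K ((i+1) % p)` with uniformly finite fibers, then the entropies of `f^[p]` on the `K i`
all agree, and the entropy of `f` on the union is `(1/p)` times the entropy of `f^[p]`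
on `K 0`. -/
theorem coverEntropy_cycle_of_compacta_onto
    {X : Type*} [MetricSpace X] [CompactSpace X]
    (f : X → X) (hf : Continuous f)
    (p : ℕ) (hp : 1 ≤ p) (K : ℕ → Set X)
    (hKne : ∀ i < p, (K i).Nonempty) (hKcomp : ∀ i < p, IsCompact (K i))
    (hKmap : ∀ i < p, f '' K i = K ((i + 1) % p))
    (M : ℕ)
    (hfib : ∀ i < p, ∀ y : X,
      ({x ∈ K i | f x = y}).Finite ∧ ({x ∈ K i | f x = y}).ncard ≤ M) :
    (∀ i < p, ∀ j < p, coverEntropy (f^[p]) (K i) = coverEntropy (f^[p]) (K j)) ∧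
      coverEntropy f (⋃ i < p, K i)
        = (1 / (p : EReal)) * coverEntropy (f^[p]) (K 0) :=
  coverEntropy_cycle_of_compacta_onto_general f hf p hp K hKmap
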